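/- arXiv:2307.08429 — 5 statements merged into one kernel-verified Lean document; each statement's English description precedes it below -/
import Mathlib

section
/- Let B₁,…,B_m ≻ 0 and let d(x) be the unique minimizer of d ↦ max_j (∇F_j(x)ᵀd + (1/2)dᵀB_j d) with optimal value θ(x). If x is not Pareto critical, then d(x) ≠ 0 and max_j ∇F_j(x)ᵀd(x) < θ(x) < 0. -/
/-! Scaling a common descent direction `d` by `t > 0` turns each model term into
`t * (g j ⬝ᵥ d) + t ^ 2 * c j`, which is negative for small `t`; hence the optimal value `θ` is
negative. Since the model vanishes at `0`, the minimizer is nonzero, and then the strictly positive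
quadratic terms separate the linear parts from `θ`. -/

open scoped Matrix
open Filter Topology Finset

lemma eventually_mul_add_sq_mul_neg {a : ℝ} (ha : a < 0) (c : ℝ) :
    ∀ᶠ t in 𝓝[>] (0 : ℝ), t * a + t ^ 2 * c < 0 := by
  have hlim : Tendsto (fun t : ℝ => a + t * c) (𝓝[>] 0) (𝓝 a) := by
    have : Continuous fun t : ℝ => a + t * c := by fun_prop
    simpa using (this.tendsto 0).mono_left nhdsWithin_le_nhds
  filter_upwards [hlim.eventually (gt_mem_nhds ha), self_mem_nhdsWithin] with t hneg hpos
  have hpos : 0 < t := hpos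
  nlinarith [mul_neg_of_pos_of_neg hpos hneg]

section QuadraticModel

variable {ι n : Type*} [Fintype ι] [Fintype n]

lemma dotProduct_add_half_quadratic_smul (g : n → ℝ) (B : Matrix n n ℝ) (t : ℝ) (d : n → ℝ) :
    g ⬝ᵥ (t • d) + 1 / 2 * ((t • d) ⬝ᵥ B *ᵥ (t • d)) =
      t * (g ⬝ᵥ d) + t ^ 2 * (1 / 2 * (d ⬝ᵥ B *ᵥ d)) := by
  simp only [Matrix.mulVec_smul, dotProduct_smul, smul_dotProduct, smul_eq_mul]
  ring

lemma exists_sup'_quadraticModel_neg (hne : (univ : Finset ι).Nonempty)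
    (B : ι → Matrix n n ℝ) (g : ι → n → ℝ) {d : n → ℝ} (hd : ∀ j, g j ⬝ᵥ d < 0) :
    ∃ v, univ.sup' hne (fun j => g j ⬝ᵥ v + 1 / 2 * (v ⬝ᵥ B j *ᵥ v)) < 0 := by
  have hsmall : ∀ j, ∀ᶠ t in 𝓝[>] (0 : ℝ),
      g j ⬝ᵥ (t • d) + 1 / 2 * ((t • d) ⬝ᵥ B j *ᵥ (t • d)) < 0 := fun j => by
    simpa only [dotProduct_add_half_quadratic_smul] using
      eventually_mul_add_sq_mul_neg (hd j) (1 / 2 * (d ⬝ᵥ B j *ᵥ d))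
  obtain ⟨t, ht⟩ := (eventually_all.2 hsmall).exists
  exact ⟨t • d, (sup'_lt_iff _).2 fun j _ => ht j⟩

end QuadraticModel

theorem stmt_5 (n m : ℕ) (hm : 0 < m)
    (B : Fin m → Matrix (Fin n) (Fin n) ℝ) (hB : ∀ j, (B j).PosDef)
    (g : Fin m → (Fin n → ℝ)) (dstar : Fin n → ℝ) (θ : ℝ)
    (f : (Fin n → ℝ) → ℝ)
    (hf : f = fun d => Finset.univ.sup' (Finset.univ_nonempty_iff.mpr ⟨⟨0, hm⟩⟩)
      (fun j => g j ⬝ᵥ d + (1 / 2) * (d ⬝ᵥ (B j).mulVec d)))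
    (hmin : ∀ d, f dstar ≤ f d) (hθ : θ = f dstar)
    (hnotcrit : ∃ d : Fin n → ℝ, ∀ j, g j ⬝ᵥ d < 0) :
    dstar ≠ 0 ∧
    Finset.univ.sup' (Finset.univ_nonempty_iff.mpr ⟨⟨0, hm⟩⟩)
      (fun j => g j ⬝ᵥ dstar) < θ ∧ θ < 0 := by
  subst hf hθ
  obtain ⟨d, hd⟩ := hnotcrit
  obtain ⟨v, hv⟩ := exists_sup'_quadraticModel_neg _ B g hd
  have hθneg := (hmin v).trans_lt hv
  have hdstar : dstar ≠ 0 := by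
    rintro rfl
    simp at hθneg
  refine ⟨hdstar, (sup'_lt_iff _).2 fun j hj => ?_, hθneg⟩
  have hquad : 0 < dstar ⬝ᵥ B j *ᵥ dstar := by
    simpa using (hB j).dotProduct_mulVec_pos hdstar
  have hterm := le_sup' (fun j => g j ⬝ᵥ dstar + 1 / 2 * (dstar ⬝ᵥ B j *ᵥ dstar)) hj
  dsimp only at hterm ⊢
  linarith
end

section
/- Let B₁,…,B_m ≻ 0 and d(x), θ(x) as above. Then x is Pareto critical if and only if d(x) = 0, which holds if and only if θ(x) = 0. -/
/-!
Since `d ↦ max_j (gⱼᵀd + ½ dᵀBⱼd)` vanishes at `0`, its minimum `θ` is `≤ 0`. A nonzero `d` with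
nonpositive model value has `gⱼᵀd < -½ dᵀBⱼd < 0` for all `j`, so it is a common descent
direction. Conversely, along a common descent direction `d` the model is `t gⱼᵀd + O(t²)`, hence
negative for small `t > 0`. So `d(x) ≠ 0` forces a descent direction, and a descent direction
forces `θ < 0 = model(0)`, which rules out both `d(x) = 0` and `θ = 0`.
-/

open scoped Matrix

section QuadMaxModel

variable {ι n : Type*} [Fintype n]

noncomputable def quadMaxModel (s : Finset ι) (hs : s.Nonempty) (g : ι → n → ℝ)
    (B : ι → Matrix n n ℝ) (d : n → ℝ) : ℝ :=
  s.sup' hs fun j => g j ⬝ᵥ d + (1 / 2) * (d ⬝ᵥ B j *ᵥ d)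

variable {s : Finset ι} (hs : s.Nonempty) {g : ι → n → ℝ} {B : ι → Matrix n n ℝ}

@[simp]
lemma quadMaxModel_zero : quadMaxModel s hs g B 0 = 0 := by
  simp [quadMaxModel]

lemma dotProduct_neg_of_quadMaxModel_nonpos (hB : ∀ j ∈ s, (B j).PosDef) {d : n → ℝ}
    (hd : d ≠ 0) (hmodel : quadMaxModel s hs g B d ≤ 0) {j : ι} (hj : j ∈ s) :
    g j ⬝ᵥ d < 0 := by
  have hterm : g j ⬝ᵥ d + (1 / 2) * (d ⬝ᵥ B j *ᵥ d) ≤ 0 :=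
    (Finset.le_sup' (fun j => g j ⬝ᵥ d + (1 / 2) * (d ⬝ᵥ B j *ᵥ d)) hj).trans hmodel
  have hquad : 0 < d ⬝ᵥ B j *ᵥ d := by
    simpa using (hB j hj).dotProduct_mulVec_pos hd
  linarith

lemma exists_pos_quadMaxModel_smul_neg (hB : ∀ j ∈ s, (B j).PosSemidef) {d : n → ℝ}
    (hd : ∀ j ∈ s, g j ⬝ᵥ d < 0) : ∃ t : ℝ, 0 < t ∧ quadMaxModel s hs g B (t • d) < 0 := by
  have hquad : ∀ j ∈ s, 0 ≤ d ⬝ᵥ B j *ᵥ d := fun j hj => by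
    simpa using (hB j hj).dotProduct_mulVec_nonneg d
  -- the `+ 1` keeps the step size positive when some `dᵀBⱼd` vanishes
  set t := s.inf' hs fun j => -(g j ⬝ᵥ d) / (d ⬝ᵥ B j *ᵥ d + 1)
  have ht : 0 < t := (Finset.lt_inf'_iff hs).2 fun j hj =>
    div_pos (neg_pos.2 (hd j hj)) (by linarith [hquad j hj])
  refine ⟨t, ht, (Finset.sup'_lt_iff hs).2 fun j hj => ?_⟩
  have hstep : t * (d ⬝ᵥ B j *ᵥ d + 1) ≤ -(g j ⬝ᵥ d) :=
    (le_div_iff₀ (by linarith [hquad j hj])).1 (Finset.inf'_le _ hj)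
  have hscale : g j ⬝ᵥ (t • d) + (1 / 2) * ((t • d) ⬝ᵥ B j *ᵥ (t • d))
      = t * (g j ⬝ᵥ d + (1 / 2) * (t * (d ⬝ᵥ B j *ᵥ d))) := by
    simp only [Matrix.mulVec_smul, dotProduct_smul, smul_dotProduct, smul_eq_mul]
    ring
  rw [hscale]
  refine mul_neg_of_pos_of_neg ht ?_
  nlinarith [hd j hj]

end QuadMaxModel

theorem stmt_6 (n m : ℕ) (hm : 0 < m)
    (B : Fin m → Matrix (Fin n) (Fin n) ℝ) (hB : ∀ j, (B j).PosDef)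
    (g : Fin m → (Fin n → ℝ)) (dstar : Fin n → ℝ) (θ : ℝ)
    (f : (Fin n → ℝ) → ℝ)
    (hf : f = fun d => Finset.univ.sup' (Finset.univ_nonempty_iff.mpr ⟨⟨0, hm⟩⟩)
      (fun j => g j ⬝ᵥ d + (1 / 2) * (d ⬝ᵥ (B j).mulVec d)))
    (hmin : ∀ d, f dstar ≤ f d) (hθ : θ = f dstar) :
    ((¬∃ d : Fin n → ℝ, ∀ j, g j ⬝ᵥ d < 0) ↔ dstar = 0) ∧
    (dstar = 0 ↔ θ = 0) := by
  have hs : (Finset.univ : Finset (Fin m)).Nonempty := Finset.univ_nonempty_iff.mpr ⟨⟨0, hm⟩⟩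
  replace hf : f = quadMaxModel Finset.univ hs g B := hf
  subst hf hθ
  have hf0 : quadMaxModel Finset.univ hs g B 0 = 0 := quadMaxModel_zero hs
  have hdescent : dstar ≠ 0 → ∀ j, g j ⬝ᵥ dstar < 0 := fun hd j =>
    dotProduct_neg_of_quadMaxModel_nonpos hs (fun j _ => hB j) hd (hf0 ▸ hmin 0)
      (Finset.mem_univ j)
  have hneg : (∃ d : Fin n → ℝ, ∀ j, g j ⬝ᵥ d < 0) →
      quadMaxModel Finset.univ hs g B dstar < 0 := by
    rintro ⟨d, hd⟩
    obtain ⟨t, -, ht⟩ :=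
      exists_pos_quadMaxModel_smul_neg hs (fun j _ => (hB j).posSemidef) fun j _ => hd j
    exact (hmin (t • d)).trans_lt ht
  refine ⟨⟨fun hcrit => ?_, fun hd hex => ?_⟩, ⟨fun hd => hd ▸ hf0, fun hθ0 => ?_⟩⟩
  · by_contra hd
    exact hcrit ⟨dstar, hdescent hd⟩
  · exact (hneg hex).ne (hd ▸ hf0)
  · by_contra hd
    exact (hneg ⟨dstar, hdescent hd⟩).ne hθ0
end

section
/- If each ∇F_j is L-Lipschitz continuous on a set U ⊆ ℝⁿ, then the map x ↦ ‖d_SD(x)‖ is L-Lipschitz continuous on U, where -d_SD(x) is the minimal-norm element of the convex hull of {∇F_1(x),…,∇F_m(x)}. -/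
lemma key_bound (n m : ℕ) (U : Set (EuclideanSpace ℝ (Fin n))) (L : ℝ)
    (G : Fin m → EuclideanSpace ℝ (Fin n) → EuclideanSpace ℝ (Fin n))
    (hLip : ∀ j, ∀ x ∈ U, ∀ y ∈ U, ‖G j x - G j y‖ ≤ L * ‖x - y‖)
    (dSD : EuclideanSpace ℝ (Fin n) → EuclideanSpace ℝ (Fin n))
    (hdSD : ∀ x ∈ U, -dSD x ∈ convexHull ℝ (Set.range fun j => G j x) ∧
      ∀ u ∈ convexHull ℝ (Set.range fun j => G j x), ‖dSD x‖ ≤ ‖u‖) :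
    ∀ x ∈ U, ∀ y ∈ U, ‖dSD x‖ ≤ ‖dSD y‖ + L * ‖x - y‖ := by
  intro x hx y hy
  obtain ⟨hymem, -⟩ := hdSD y hy
  obtain ⟨-, hxmin⟩ := hdSD x hx
  rw [convexHull_range_eq_exists_affineCombination] at hymem
  obtain ⟨s, w, hw₀, hw₁, hcomb⟩ := hymem
  rw [Finset.affineCombination_eq_linear_combination _ _ _ hw₁] at hcomb
  set u : EuclideanSpace ℝ (Fin n) := ∑ i ∈ s, w i • G i x with hu
  have humem : u ∈ convexHull ℝ (Set.range fun j => G j x) := by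
    rw [convexHull_range_eq_exists_affineCombination]
    exact ⟨s, w, hw₀, hw₁, by
      rw [Finset.affineCombination_eq_linear_combination _ _ _ hw₁]⟩
  have h1 : ‖dSD x‖ ≤ ‖u‖ := hxmin u humem
  have h2 : ‖u - -dSD y‖ ≤ L * ‖x - y‖ := by
    rw [← hcomb, hu, ← Finset.sum_sub_distrib]
    have : ∀ i ∈ s, w i • G i x - w i • G i y = w i • (G i x - G i y) := by
      intro i _; rw [smul_sub]
    rw [Finset.sum_congr rfl this]
    calc ‖∑ i ∈ s, w i • (G i x - G i y)‖
        ≤ ∑ i ∈ s, ‖w i • (G i x - G i y)‖ := norm_sum_le _ _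
      _ ≤ ∑ i ∈ s, w i * (L * ‖x - y‖) := by
          apply Finset.sum_le_sum
          intro i hi
          rw [norm_smul, Real.norm_eq_abs, abs_of_nonneg (hw₀ i hi)]
          exact mul_le_mul_of_nonneg_left (hLip i x hx y hy) (hw₀ i hi)
      _ = L * ‖x - y‖ := by rw [← Finset.sum_mul, hw₁, one_mul]
  calc ‖dSD x‖ ≤ ‖u‖ := h1
    _ = ‖(u - -dSD y) + -dSD y‖ := by rw [sub_add_cancel]
    _ ≤ ‖u - -dSD y‖ + ‖-dSD y‖ := norm_add_le _ _
    _ ≤ ‖dSD y‖ + L * ‖x - y‖ := by rw [norm_neg]; linarith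

theorem stmt_8 (n m : ℕ) (U : Set (EuclideanSpace ℝ (Fin n))) (L : ℝ)
    (G : Fin m → EuclideanSpace ℝ (Fin n) → EuclideanSpace ℝ (Fin n))
    (hLip : ∀ j, ∀ x ∈ U, ∀ y ∈ U, ‖G j x - G j y‖ ≤ L * ‖x - y‖)
    (dSD : EuclideanSpace ℝ (Fin n) → EuclideanSpace ℝ (Fin n))
    (hdSD : ∀ x ∈ U, -dSD x ∈ convexHull ℝ (Set.range fun j => G j x) ∧
      ∀ u ∈ convexHull ℝ (Set.range fun j => G j x), ‖dSD x‖ ≤ ‖u‖) :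
    ∀ x ∈ U, ∀ y ∈ U, |‖dSD x‖ - ‖dSD y‖| ≤ L * ‖x - y‖ := by
  intro x hx y hy
  rw [abs_sub_le_iff]
  constructor
  · linarith [key_bound n m U L G hLip dSD hdSD x hx y hy]
  · have := key_bound n m U L G hLip dSD hdSD y hy x hx
    rw [norm_sub_rev] at this
    linarith
end

section
/- If x is not Pareto critical then d_SD(x) ≠ 0 and max_j ∇F_j(x)ᵀd_SD(x) < -(1/2)‖d_SD(x)‖² < 0; moreover x is Pareto critical if and only if d_SD(x) = 0. -/
open scoped RealInnerProductSpace

theorem stmt_9 (n m : ℕ) (hm : 0 < m)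
    (g : Fin m → EuclideanSpace ℝ (Fin n)) (dSD : EuclideanSpace ℝ (Fin n))
    (hmin : ∀ d : EuclideanSpace ℝ (Fin n),
      Finset.univ.sup' (Finset.univ_nonempty_iff.mpr ⟨⟨0, hm⟩⟩)
        (fun j => ⟪g j, dSD⟫) + (1 / 2) * ‖dSD‖ ^ 2 ≤
      Finset.univ.sup' (Finset.univ_nonempty_iff.mpr ⟨⟨0, hm⟩⟩)
        (fun j => ⟪g j, d⟫) + (1 / 2) * ‖d‖ ^ 2) :
    ((∃ d : EuclideanSpace ℝ (Fin n), ∀ j, ⟪g j, d⟫ < 0) →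
      dSD ≠ 0 ∧
      Finset.univ.sup' (Finset.univ_nonempty_iff.mpr ⟨⟨0, hm⟩⟩)
        (fun j => ⟪g j, dSD⟫) < -(1 / 2) * ‖dSD‖ ^ 2 ∧
      -(1 / 2) * ‖dSD‖ ^ 2 < 0) ∧
    ((¬∃ d : EuclideanSpace ℝ (Fin n), ∀ j, ⟪g j, d⟫ < 0) ↔ dSD = 0) := by
  have hne : (Finset.univ : Finset (Fin m)).Nonempty :=
    Finset.univ_nonempty_iff.mpr ⟨⟨0, hm⟩⟩
  set φ : EuclideanSpace ℝ (Fin n) → ℝ :=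
    fun d => Finset.univ.sup' hne (fun j => ⟪g j, d⟫) with hφ
  have hφ0 : φ 0 = 0 := by
    simp [hφ, inner_zero_right, Finset.sup'_const]
  -- key: descent direction ⇒ optimal value < 0
  have key : (∃ d : EuclideanSpace ℝ (Fin n), ∀ j, ⟪g j, d⟫ < 0) →
      φ dSD + (1 / 2) * ‖dSD‖ ^ 2 < 0 := by
    rintro ⟨d, hd⟩
    set M : ℝ := φ d with hM
    have hMneg : M < 0 := by
      rw [hM, hφ]
      exact (Finset.sup'_lt_iff hne).mpr (fun j _ => hd j)
    set t : ℝ := -M / (‖d‖ ^ 2 + 1) with ht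
    have hden : (0 : ℝ) < ‖d‖ ^ 2 + 1 := by positivity
    have htpos : 0 < t := by
      rw [ht]; exact div_pos (by linarith) hden
    have hsup : φ (t • d) ≤ t * M := by
      rw [hφ]
      apply Finset.sup'_le
      intro j _
      have := real_inner_smul_right (g j) d t
      rw [this]
      have : ⟪g j, d⟫ ≤ M := by
        rw [hM, hφ]; exact Finset.le_sup' (fun j => ⟪g j, d⟫) (Finset.mem_univ j)
      exact mul_le_mul_of_nonneg_left this htpos.le
    have hnorm : ‖t • d‖ ^ 2 = t ^ 2 * ‖d‖ ^ 2 := by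
      rw [norm_smul]
      simp [mul_pow, abs_of_pos htpos]
    have hval : t * M + (1 / 2) * (t ^ 2 * ‖d‖ ^ 2) < 0 := by
      have h1 : t * M + (1 / 2) * (t ^ 2 * ‖d‖ ^ 2) = t * (M + t * ‖d‖ ^ 2 / 2) := by
        ring
      rw [h1]
      apply mul_neg_of_pos_of_neg htpos
      have : t * ‖d‖ ^ 2 / 2 < -M := by
        rw [ht]
        rw [div_mul_eq_mul_div, div_div, div_lt_iff₀ (by positivity)]
        nlinarith [sq_nonneg ‖d‖]
      linarith
    calc φ dSD + (1 / 2) * ‖dSD‖ ^ 2 ≤ φ (t • d) + (1 / 2) * ‖t • d‖ ^ 2 := hmin _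
      _ ≤ t * M + (1 / 2) * (t ^ 2 * ‖d‖ ^ 2) := by rw [hnorm]; linarith
      _ < 0 := hval
  have main : (∃ d : EuclideanSpace ℝ (Fin n), ∀ j, ⟪g j, d⟫ < 0) →
      dSD ≠ 0 ∧ φ dSD < -(1 / 2) * ‖dSD‖ ^ 2 ∧ -(1 / 2) * ‖dSD‖ ^ 2 < 0 := by
    intro hdesc
    have hV := key hdesc
    have hdne : dSD ≠ 0 := by
      intro h
      rw [h, hφ0, norm_zero] at hV
      norm_num at hV
    have hnpos : 0 < ‖dSD‖ ^ 2 := pow_pos (norm_pos_iff.mpr hdne) 2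
    exact ⟨hdne, by linarith, by linarith⟩
  refine ⟨main, ?_, ?_⟩
  · intro hno
    -- every d has some j with ⟪g j, d⟫ ≥ 0, so φ dSD ≥ 0
    have hφpos : 0 ≤ φ dSD := by
      by_contra h
      push_neg at h
      exact hno ⟨dSD, fun j => lt_of_le_of_lt
        (Finset.le_sup' (fun j => ⟪g j, dSD⟫) (Finset.mem_univ j)) h⟩
    have hV : φ dSD + (1 / 2) * ‖dSD‖ ^ 2 ≤ 0 := by
      calc φ dSD + (1 / 2) * ‖dSD‖ ^ 2
          ≤ φ 0 + (1 / 2) * ‖(0 : EuclideanSpace ℝ (Fin n))‖ ^ 2 := hmin 0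
        _ = 0 := by rw [hφ0]; simp
    have : ‖dSD‖ ^ 2 ≤ 0 := by nlinarith
    have : ‖dSD‖ = 0 := by nlinarith [sq_nonneg ‖dSD‖, norm_nonneg dSD]
    exact norm_eq_zero.mp this
  · intro h hdesc
    exact (main hdesc).1 h
end

section
/- Let B̃ be a symmetric positive definite n×n matrix and s̃ ∈ ℝⁿ a unit-scaled nonzero vector. Define q = (s̃ᵀB̃s̃)/‖s̃‖² and cos β = (s̃ᵀB̃s̃)/(‖s̃‖·‖B̃s̃‖). If cos²β → 1 and q → 1 along a sequence, then ‖(B̃ - I)s̃‖²/‖s̃‖² = q²/cos²β - 2q + 1 → 0. -/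
open scoped Matrix
open Filter

theorem stmt_15 (n : ℕ)
    (B : ℕ → Matrix (Fin n) (Fin n) ℝ) (hB : ∀ k, (B k).PosDef)
    (s : ℕ → (Fin n → ℝ)) (hs : ∀ k, s k ≠ 0)
    (q cosβ : ℕ → ℝ)
    (hq : ∀ k, q k = (s k ⬝ᵥ (B k).mulVec (s k)) / (s k ⬝ᵥ s k))
    (hcos : ∀ k, cosβ k = (s k ⬝ᵥ (B k).mulVec (s k)) /
      (Real.sqrt (s k ⬝ᵥ s k) * Real.sqrt ((B k).mulVec (s k) ⬝ᵥ (B k).mulVec (s k))))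
    (hcoslim : Tendsto (fun k => (cosβ k) ^ 2) atTop (nhds 1))
    (hqlim : Tendsto q atTop (nhds 1)) :
    (∀ k, (((B k).mulVec (s k) - s k) ⬝ᵥ ((B k).mulVec (s k) - s k)) / (s k ⬝ᵥ s k) =
      (q k) ^ 2 / (cosβ k) ^ 2 - 2 * q k + 1) ∧
    Tendsto (fun k =>
      (((B k).mulVec (s k) - s k) ⬝ᵥ ((B k).mulVec (s k) - s k)) / (s k ⬝ᵥ s k))
      atTop (nhds 0) := by
  have key : ∀ k, (((B k).mulVec (s k) - s k) ⬝ᵥ ((B k).mulVec (s k) - s k)) / (s k ⬝ᵥ s k) =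
      (q k) ^ 2 / (cosβ k) ^ 2 - 2 * q k + 1 := by
    intro k
    set v := (B k).mulVec (s k) with hv
    have hb : 0 < s k ⬝ᵥ v := by
      have := (hB k).re_dotProduct_pos (hs k)
      simpa [dotProduct] using this
    have ha : 0 < s k ⬝ᵥ s k :=
      lt_of_le_of_ne (Finset.sum_nonneg fun i _ => mul_self_nonneg _)
        (fun h => hs k (dotProduct_self_eq_zero.mp h.symm))
    have hvne : v ≠ 0 := by
      intro h
      rw [h] at hb
      simp at hb
    have hc : 0 < v ⬝ᵥ v :=
      lt_of_le_of_ne (Finset.sum_nonneg fun i _ => mul_self_nonneg _)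
        (fun h => hvne (dotProduct_self_eq_zero.mp h.symm))
    have hcos2 : (cosβ k) ^ 2 = (s k ⬝ᵥ v) ^ 2 / ((s k ⬝ᵥ s k) * (v ⬝ᵥ v)) := by
      rw [hcos k]
      rw [div_pow, mul_pow, Real.sq_sqrt ha.le, Real.sq_sqrt hc.le]
    have hexp : (v - s k) ⬝ᵥ (v - s k) = v ⬝ᵥ v - 2 * (s k ⬝ᵥ v) + s k ⬝ᵥ s k := by
      rw [sub_dotProduct, dotProduct_sub, dotProduct_sub,
        dotProduct_comm v (s k)]
      ring
    rw [hexp, hq k, hcos2]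
    field_simp
    ring
  refine ⟨key, ?_⟩
  have hlim : Tendsto (fun k => (q k) ^ 2 / (cosβ k) ^ 2 - 2 * q k + 1) atTop (nhds 0) := by
    have h1 : Tendsto (fun k => (q k) ^ 2 / (cosβ k) ^ 2) atTop (nhds ((1:ℝ) ^ 2 / 1)) := by
      exact Tendsto.div (hqlim.pow 2) hcoslim one_ne_zero
    have h2 : Tendsto (fun k => (q k) ^ 2 / (cosβ k) ^ 2 - 2 * q k + 1) atTop
        (nhds ((1:ℝ) ^ 2 / 1 - 2 * 1 + 1)) :=
      (h1.sub (hqlim.const_mul 2)).add tendsto_const_nhds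
    norm_num at h2
    exact h2
  exact hlim.congr (fun k => (key k).symm)
end
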